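/- Let Z ⊆ H_L ⊗ H_R be a subspace satisfying an r(·)-dimension bound on L. Then any unit vector ψ ∈ Z with Schmidt decomposition ψ = Σ_i √λ_i |ψ_i^L⟩|ψ_i^R⟩ (λ_1 ≥ λ_2 ≥ …) has at most r(ξ) squared Schmidt coefficients λ_i greater than ξ, for every ξ ∈ (0,1]. In particular λ_{r+1} ≤ √(2δ) whenever there is a δ-viable subspace of dimension r. -/

import Mathlib

/- STATEMENT 16: an `r(·)`-dimension bound on `L` implies that any unit `ψ ∈ Z` has at most
`r(ξ)` squared Schmidt coefficients greater than `ξ`, for every `ξ ∈ (0,1]`. -/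

variable {ι κ : Type*} [Fintype ι] [Fintype κ] [DecidableEq ι] [DecidableEq κ]

/-- The operator `P_V ⊗ I` on `H_L ⊗ H_R = EuclideanSpace ℂ (ι × κ)`. -/
noncomputable def applyPL (V : Submodule ℂ (EuclideanSpace ℂ ι))
    (ψ : EuclideanSpace ℂ (ι × κ)) : EuclideanSpace ℂ (ι × κ) :=
  WithLp.toLp 2 fun p => ((V.orthogonalProjection (WithLp.toLp 2 (fun i => ψ (i, p.2)) : EuclideanSpace ℂ ι) : V) :
      EuclideanSpace ℂ ι) p.1

/-- The elementary tensor `x ⊗ y`. -/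
def tensorE (x : EuclideanSpace ℂ ι) (y : EuclideanSpace ℂ κ) :
    EuclideanSpace ℂ (ι × κ) :=
  WithLp.toLp 2 fun p => x p.1 * y p.2

lemma inner_tensorE {ι κ : Type*} [Fintype ι] [Fintype κ]
    (x x' : EuclideanSpace ℂ ι) (y y' : EuclideanSpace ℂ κ) :
    (inner ℂ (tensorE x y) (tensorE x' y') : ℂ) = (inner ℂ x x' : ℂ) * (inner ℂ y y' : ℂ) := by
  simp only [PiLp.inner_apply, RCLike.inner_apply, tensorE, PiLp.toLp_apply]
  rw [Fintype.sum_prod_type, Finset.sum_mul_sum]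
  refine Finset.sum_congr rfl fun p1 _ => Finset.sum_congr rfl fun p2 _ => ?_
  simp only [map_mul]
  ring

lemma esum_apply {α ι : Type*} (s : Finset α) (g : α → EuclideanSpace ℂ ι) (i : ι) :
    (∑ x ∈ s, g x) i = ∑ x ∈ s, g x i :=
  by rw [WithLp.ofLp_sum, Finset.sum_apply]

set_option maxHeartbeats 10000000 in
theorem stmt16 (Z : Submodule ℂ (EuclideanSpace ℂ (ι × κ))) (r : ℝ → ℝ)
    -- `Z` satisfies an `r(·)`-dimension bound on `L`
    (hdim : ∀ δ : ℝ, 0 ≤ δ → δ ≤ 1 → ∃ V : Submodule ℂ (EuclideanSpace ℂ ι),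
      (Module.finrank ℂ V : ℝ) ≤ r (Real.sqrt (2 * δ)) ∧
      ∀ φ ∈ Z, ‖φ‖ = 1 → 1 - δ ≤ (inner ℂ φ (applyPL V φ) : ℂ).re)
    -- a unit vector `ψ ∈ Z` with Schmidt decomposition `Σ √λ_i |a_i⟩|b_i⟩`
    (N : ℕ) (lam : Fin N → ℝ) (hnn : ∀ i, 0 ≤ lam i) (hsum : ∑ i, lam i = 1)
    (a : Fin N → EuclideanSpace ℂ ι) (b : Fin N → EuclideanSpace ℂ κ)
    (ha : Orthonormal ℂ a) (hb : Orthonormal ℂ b)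
    (ψ : EuclideanSpace ℂ (ι × κ)) (hψZ : ψ ∈ Z) (hψ1 : ‖ψ‖ = 1)
    (hdecomp : ψ = ∑ i, ((Real.sqrt (lam i) : ℝ) : ℂ) • tensorE (a i) (b i)) :
    ∀ ξ : ℝ, 0 < ξ → ξ ≤ 1 →
      ((Finset.univ.filter fun i => ξ < lam i).card : ℝ) ≤ r ξ := by
  intro ξ hξ0 hξ1
  obtain ⟨V, hVdim, hvia⟩ := hdim (ξ^2/2) (by positivity) (by nlinarith)
  have hsq : Real.sqrt (2 * (ξ^2/2)) = ξ := by
    rw [show (2:ℝ) * (ξ^2/2) = ξ^2 by ring, Real.sqrt_sq hξ0.le]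
  rw [hsq] at hVdim
  set c : Fin N → ℂ := fun i => ((Real.sqrt (lam i) : ℝ) : ℂ) with hc
  set Pa : Fin N → EuclideanSpace ℂ ι :=
    fun i => ((V.orthogonalProjection (a i) : V) : EuclideanSpace ℂ ι) with hPa
  set f : Fin N → ℝ := fun i => ‖Pa i‖ ^ 2 with hf
  -- pointwise formula for ψ
  have hψp : ∀ p : ι × κ, ψ p = ∑ j, c j * a j p.1 * b j p.2 := by
    intro p
    rw [hdecomp, esum_apply]
    simp [tensorE, PiLp.smul_apply, smul_eq_mul, mul_assoc, c]
  -- the L-slice of ψ as a sum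
  have hfun : ∀ k : κ, (WithLp.toLp 2 (fun i => ψ (i, k)) : EuclideanSpace ℂ ι)
      = ∑ j, (c j * b j k) • a j := by
    intro k
    ext i
    rw [PiLp.toLp_apply]
    rw [hψp (i, k), esum_apply]
    simp [PiLp.smul_apply, smul_eq_mul, mul_assoc, mul_comm, mul_left_comm]
  have happly : ∀ p : ι × κ, applyPL V ψ p = ∑ j, c j * b j p.2 * Pa j p.1 := by
    intro p
    show ((V.orthogonalProjection (WithLp.toLp 2 (fun i => ψ (i, p.2)) : EuclideanSpace ℂ ι) : V) :
      EuclideanSpace ℂ ι) p.1 = _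
    rw [hfun p.2, map_sum]
    rw [Submodule.coe_sum, esum_apply]
    simp [Pa, PiLp.smul_apply, smul_eq_mul]
  have happly' : applyPL V ψ = ∑ j, c j • tensorE (Pa j) (b j) := by
    ext p
    rw [happly p, esum_apply]
    refine Finset.sum_congr rfl fun j _ => ?_
    simp only [PiLp.smul_apply, smul_eq_mul, tensorE, PiLp.toLp_apply]
    ring
  have hbij : ∀ i j, (inner ℂ (b i) (b j) : ℂ) = if i = j then 1 else 0 :=
    fun i j => orthonormal_iff_ite.mp hb i j
  have hip : ∀ i, (inner ℂ (a i) (Pa i) : ℂ) = ((f i : ℝ) : ℂ) := by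
    intro i
    have hz : (inner ℂ (a i - Pa i) (Pa i) : ℂ) = 0 :=
      V.starProjection_inner_eq_zero (a i) (Pa i) (SetLike.coe_mem _)
    have hx : (inner ℂ (a i) (Pa i) : ℂ) = inner ℂ (a i - Pa i) (Pa i) + inner ℂ (Pa i) (Pa i) := by
      rw [← inner_add_left, sub_add_cancel]
    rw [hx, hz, zero_add, inner_self_eq_norm_sq_to_K]
    norm_num [f]
  have key : (inner ℂ ψ (applyPL V ψ) : ℂ) = ∑ i, ((lam i : ℝ) : ℂ) * ((f i : ℝ) : ℂ) := by
    rw [happly', hdecomp, sum_inner]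
    refine Finset.sum_congr rfl fun i _ => ?_
    rw [inner_sum]
    simp only [inner_smul_left, inner_smul_right, inner_tensorE, hbij, mul_ite, mul_one,
      mul_zero, ite_mul, zero_mul, Finset.sum_ite_eq, Finset.mem_univ, if_true]
    rw [hip i]
    simp only [c, Complex.conj_ofReal]
    rw [show ((Real.sqrt (lam i) : ℝ) : ℂ) * (((Real.sqrt (lam i) : ℝ) : ℂ) * ((f i : ℝ) : ℂ))
        = (((Real.sqrt (lam i) * Real.sqrt (lam i) : ℝ)) : ℂ) * ((f i : ℝ) : ℂ) by push_cast; ring,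
      Real.mul_self_sqrt (hnn i)]
  have h1 : 1 - ξ^2/2 ≤ ∑ i, lam i * f i := by
    have h := hvia ψ hψZ hψ1
    rw [key] at h
    simpa [Complex.ofReal_mul] using h
  -- Step B : ∑ f ≤ finrank V
  haveI : FiniteDimensional ℂ V := FiniteDimensional.finiteDimensional_submodule V
  set e := stdOrthonormalBasis ℂ V with he
  have hfe : ∀ i, f i = ∑ j, ‖(inner ℂ (a i) ((e j : EuclideanSpace ℂ ι)) : ℂ)‖^2 := by
    intro i
    have h2 : f i = ‖e.repr (V.orthogonalProjection (a i))‖^2 := by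
      simp only [hf, hPa]
      rw [Submodule.norm_coe, e.repr.norm_map]
    rw [h2, EuclideanSpace.norm_eq, Real.sq_sqrt (by positivity)]
    refine Finset.sum_congr rfl fun j _ => ?_
    rw [e.repr_apply_apply, Submodule.inner_orthogonalProjection_eq_of_mem_left, norm_inner_symm]
  have hB : ∑ i, f i ≤ (Module.finrank ℂ V : ℝ) := by
    calc ∑ i, f i = ∑ j, ∑ i, ‖(inner ℂ (a i) ((e j : EuclideanSpace ℂ ι)) : ℂ)‖^2 := by
          rw [← Finset.sum_comm]; exact Finset.sum_congr rfl fun i _ => hfe i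
      _ ≤ ∑ _j : Fin (Module.finrank ℂ V), (1:ℝ) := by
          refine Finset.sum_le_sum fun j _ => ?_
          have hb1 : ‖((e j : V) : EuclideanSpace ℂ ι)‖ = 1 := by
            rw [Submodule.norm_coe]; exact e.orthonormal.1 j
          have := ha.sum_inner_products_le (x := ((e j : V) : EuclideanSpace ℂ ι))
            (s := Finset.univ)
          rw [hb1] at this
          simpa using this
      _ = (Module.finrank ℂ V : ℝ) := by simp
  -- bounds on f
  have hf0 : ∀ i, 0 ≤ f i := fun i => sq_nonneg _
  have hf1 : ∀ i, f i ≤ 1 := by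
    intro i
    have hn : ‖Pa i‖ ≤ 1 := by
      have h3 : ‖V.orthogonalProjection (a i)‖ ≤ ‖V.orthogonalProjection‖ * ‖a i‖ :=
        (V.orthogonalProjection).le_opNorm (a i)
      have h4 : ‖(V.orthogonalProjection : EuclideanSpace ℂ ι →L[ℂ] V)‖ ≤ 1 :=
        Submodule.orthogonalProjection_norm_le V
      have h5 : ‖a i‖ = 1 := ha.1 i
      calc ‖Pa i‖ = ‖V.orthogonalProjection (a i)‖ := by
            simp only [hPa]; exact Submodule.norm_coe _
        _ ≤ ‖V.orthogonalProjection‖ * ‖a i‖ := h3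
        _ ≤ 1 := by rw [h5, mul_one]; exact h4
    calc f i = ‖Pa i‖^2 := rfl
      _ ≤ 1^2 := by gcongr
      _ = 1 := one_pow 2
  -- counting
  set S := Finset.univ.filter fun i => ξ < lam i with hS
  have t2 : ∑ i ∈ S, ξ * (1 - f i) ≤ ∑ i, lam i * (1 - f i) := by
    calc ∑ i ∈ S, ξ * (1 - f i) ≤ ∑ i ∈ S, lam i * (1 - f i) := by
          refine Finset.sum_le_sum fun i hi => ?_
          have : ξ < lam i := (Finset.mem_filter.mp hi).2
          exact mul_le_mul_of_nonneg_right this.le (by linarith [hf1 i])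
      _ ≤ ∑ i, lam i * (1 - f i) := by
          refine Finset.sum_le_sum_of_subset_of_nonneg (Finset.subset_univ S) fun i _ _ => ?_
          exact mul_nonneg (hnn i) (by linarith [hf1 i])
  have t3 : ∑ i, lam i * (1 - f i) ≤ ξ^2/2 := by
    have : ∑ i, lam i * (1 - f i) = 1 - ∑ i, lam i * f i := by
      have e2 : ∑ i, lam i * (1 - f i) = ∑ i, (lam i - lam i * f i) :=
        Finset.sum_congr rfl fun i _ => by ring
      rw [e2, Finset.sum_sub_distrib, hsum]
    rw [this]; linarith
  have t4 : (S.card : ℝ) - ∑ i ∈ S, f i ≤ ξ/2 := by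
    have hsumS : ∑ i ∈ S, ξ * (1 - f i) = ξ * ((S.card : ℝ) - ∑ i ∈ S, f i) := by
      have e1 : ∑ i ∈ S, ξ * (1 - f i) = ∑ i ∈ S, (ξ - ξ * f i) :=
        Finset.sum_congr rfl fun i _ => by ring
      rw [e1, Finset.sum_sub_distrib, Finset.sum_const, ← Finset.mul_sum, nsmul_eq_mul]
      ring
    have := le_trans t2 t3
    rw [hsumS] at this
    nlinarith
  have t5 : ∑ i ∈ S, f i ≤ (Module.finrank ℂ V : ℝ) := by
    refine le_trans ?_ hB
    exact Finset.sum_le_sum_of_subset_of_nonneg (Finset.subset_univ S) fun i _ _ => hf0 i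
  have t6 : (S.card : ℝ) < (Module.finrank ℂ V : ℝ) + 1 := by
    have : (0:ℝ) < 1 - ξ/2 := by linarith
    nlinarith [t4, t5]
  have t7 : S.card ≤ Module.finrank ℂ V := by
    have := t6
    exact_mod_cast Nat.lt_succ_iff.mp (by exact_mod_cast this)
  calc (S.card : ℝ) ≤ (Module.finrank ℂ V : ℝ) := by exact_mod_cast t7
    _ ≤ r ξ := hVdim
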